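/- With Ω, P₁, ..., Pₙ as above, the sesquilinear form t(f,g) = Σᵢ ∫_Ω ⟨f(Q), e_i(Q)⟩ · conj(⟨g(Q), e_i(Q)⟩) dQ on the Hilbert space L²(Ω; ℂⁿ) is a positive semidefinite Hermitian form which is definite: t(f,f) = 0 implies f = 0 a.e. Hence t defines an inner product on L²(Ω; ℂⁿ). -/

import Mathlib

open MeasureTheory Finset

/-- The projection `⟨f(Q), e_i(Q)⟩` of a vector field `f` onto the unit direction
`e_i(Q) = (P_i − Q)/|P_i − Q|`. -/
noncomputable def proj {n : ℕ} (P : Fin n → EuclideanSpace ℝ (Fin n))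
    (f : EuclideanSpace ℝ (Fin n) → (Fin n → ℂ)) (i : Fin n)
    (Q : EuclideanSpace ℝ (Fin n)) : ℂ :=
  ∑ j, f Q j * (((P i j - Q j) / dist Q (P i) : ℝ) : ℂ)

/-- The sesquilinear form `t(f,g) = Σᵢ ∫_Ω ⟨f, e_i⟩ conj⟨g, e_i⟩`. -/
noncomputable def sform {n : ℕ} (Ω : Set (EuclideanSpace ℝ (Fin n)))
    (P : Fin n → EuclideanSpace ℝ (Fin n))
    (f g : EuclideanSpace ℝ (Fin n) → (Fin n → ℂ)) : ℂ :=
  ∑ i, ∫ Q in Ω, proj P f i Q * (starRingEnd ℂ) (proj P g i Q)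

/-!
The form is a sum of Gram-type integrals `∫ |⟨f, e_i⟩|²`, so it is Hermitian and nonnegative, and
`t(f,f) = 0` forces `⟨f(Q), P_i - Q⟩ = 0` for all `i` and a.e. `Q`. By the matrix determinant lemma,
`det (P_i - Q)_i = det P · (1 - ⟨Q, P⁻¹𝟙⟩)`, so this determinant vanishes only on an affine
hyperplane, a null set; off it the vectors `P_i - Q` span and `f(Q) = 0`.
-/

open ComplexConjugate ComplexOrder Matrix

theorem addHaar_setOf_apply_eq_of_ne_zero {E : Type*} [NormedAddCommGroup E] [NormedSpace ℝ E]
    [MeasurableSpace E] [BorelSpace E] [FiniteDimensional ℝ E] (μ : Measure E)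
    [μ.IsAddHaarMeasure] (ℓ : E →ₗ[ℝ] ℝ) {c : ℝ} (hc : c ≠ 0) : μ {x | ℓ x = c} = 0 := by
  by_cases hℓ : ℓ = 0
  · simp [hℓ, hc.symm]
  obtain ⟨v, hv⟩ : ∃ v, ℓ v ≠ 0 := by simpa [LinearMap.ext_iff] using hℓ
  set x₀ := (c / ℓ v) • v
  have hx₀ : ℓ x₀ = c := by simp [x₀, hv]
  have : {x | ℓ x = c} = (· + -x₀) ⁻¹' (LinearMap.ker ℓ : Set E) := by
    ext x; simp [hx₀, ← sub_eq_add_neg, sub_eq_zero]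
  rw [this, measure_preimage_add_right]
  exact Measure.addHaar_submodule μ _ (mt LinearMap.ker_eq_top.1 hℓ)

theorem Matrix.det_of_sub_row {m α : Type*} [Fintype m] [DecidableEq m] [CommRing α]
    {A : Matrix m m α} (hA : IsUnit A.det) (q : m → α) :
    (of fun i j => A i j - q j).det = A.det * (1 - q ⬝ᵥ (A⁻¹ *ᵥ 1)) := by
  have h : (of fun i j => A i j - q j) =
      A + replicateCol Unit (fun _ => (-1 : α)) * replicateRow Unit q := by
    ext i j; simp [sub_eq_add_neg, Matrix.mul_apply]
  rw [h, det_add_replicateCol_mul_replicateRow hA, det_unique (n := Unit)]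
  simp only [Matrix.add_apply, Matrix.mul_apply, one_apply_eq, replicateRow_apply,
    replicateCol_apply, dotProduct, mulVec, Pi.one_apply, mul_one, mul_neg, sum_neg_distrib,
    mul_sum, sub_eq_add_neg]
  rw [Finset.sum_comm]

theorem volume_setOf_det_sub_eq_zero {n : ℕ} (P : Fin n → EuclideanSpace ℝ (Fin n))
    (hdet : (of fun i j => P i j).det ≠ 0) :
    volume {Q : EuclideanSpace ℝ (Fin n) | (of fun i j => P i j - Q j).det = 0} = 0 := by
  set w := EuclideanSpace.equiv (Fin n) ℝ |>.symm ((of fun i j => P i j)⁻¹ *ᵥ 1)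
  refine measure_mono_null (fun Q hQ => ?_)
    (addHaar_setOf_apply_eq_of_ne_zero volume (innerₛₗ ℝ w) one_ne_zero)
  have h := det_of_sub_row (Ne.isUnit hdet) (fun j => Q j)
  simp only [of_apply] at h
  rw [hQ, eq_comm, mul_eq_zero, sub_eq_zero] at h
  simpa [EuclideanSpace.inner_eq_star_dotProduct, w, dotProduct_comm]
    using (h.resolve_left hdet).symm

theorem norm_coe_sub_div_dist_le_one {n : ℕ} (x y : EuclideanSpace ℝ (Fin n)) (j : Fin n) :
    ‖(((x j - y j) / dist y x : ℝ) : ℂ)‖ ≤ 1 := by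
  rw [Complex.norm_real, norm_div, Real.norm_of_nonneg dist_nonneg, ← dist_eq_norm]
  exact div_le_one_of_le₀ (dist_comm (y j) (x j) ▸ PiLp.dist_apply_le y x j) dist_nonneg

variable {n : ℕ} (Ω : Set (EuclideanSpace ℝ (Fin n))) (P : Fin n → EuclideanSpace ℝ (Fin n))

theorem memLp_proj {f : EuclideanSpace ℝ (Fin n) → (Fin n → ℂ)} {p : ENNReal}
    {μ : Measure (EuclideanSpace ℝ (Fin n))} (hf : MemLp f p μ) (i : Fin n) :
    MemLp (proj P f i) p μ := by
  refine memLp_finsetSum _ fun j _ => ?_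
  have hfj : MemLp (fun Q => f Q j) p μ := hf.eval j
  refine hfj.of_le (hfj.1.mul (by fun_prop : Measurable _).aestronglyMeasurable)
    (.of_forall fun Q => ?_)
  rw [norm_mul]
  exact mul_le_of_le_one_right (norm_nonneg _) (norm_coe_sub_div_dist_le_one _ _ j)

theorem sform_swap (f g : EuclideanSpace ℝ (Fin n) → (Fin n → ℂ)) :
    sform Ω P g f = conj (sform Ω P f g) := by
  simp only [sform, map_sum, ← integral_conj, map_mul, Complex.conj_conj, mul_comm]

theorem sform_self (f : EuclideanSpace ℝ (Fin n) → (Fin n → ℂ)) :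
    sform Ω P f f = ((∑ i, ∫ Q in Ω, ‖proj P f i Q‖ ^ 2 : ℝ) : ℂ) := by
  simp only [sform, Complex.mul_conj', ← Complex.ofReal_pow, integral_complex_ofReal,
    Complex.ofReal_sum]

theorem sform_self_nonneg (f : EuclideanSpace ℝ (Fin n) → (Fin n → ℂ)) : 0 ≤ sform Ω P f f := by
  rw [sform_self]
  exact Complex.zero_le_real.2 (sum_nonneg fun i _ => integral_nonneg fun Q => by positivity)

theorem ae_proj_eq_zero_of_sform_self_eq_zero {f : EuclideanSpace ℝ (Fin n) → (Fin n → ℂ)}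
    (hf : MemLp f 2 (volume.restrict Ω)) (h : sform Ω P f f = 0) :
    ∀ᵐ Q ∂volume.restrict Ω, ∀ i, proj P f i Q = 0 := by
  have hint (i : Fin n) : Integrable (fun Q => ‖proj P f i Q‖ ^ 2) (volume.restrict Ω) :=
    (memLp_proj P hf i).integrable_norm_pow two_ne_zero
  rw [sform_self, Complex.ofReal_eq_zero,
    sum_eq_zero_iff_of_nonneg fun i _ => integral_nonneg fun Q => by positivity] at h
  refine ae_all_iff.2 fun i => ?_
  filter_upwards [(integral_eq_zero_iff_of_nonneg (fun Q => by positivity) (hint i)).1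
    (h i (mem_univ i))] with Q hQ
  simpa using hQ

theorem eq_zero_of_forall_proj_eq_zero {f : EuclideanSpace ℝ (Fin n) → (Fin n → ℂ)}
    {Q : EuclideanSpace ℝ (Fin n)} (hdet : (of fun i j => P i j - Q j).det ≠ 0)
    (h : ∀ i, proj P f i Q = 0) : f Q = 0 := by
  set A : Matrix (Fin n) (Fin n) ℝ := of fun i j => P i j - Q j
  have hQP (i : Fin n) : dist Q (P i) ≠ 0 := by
    rintro hi
    exact hdet (det_eq_zero_of_row_eq_zero i fun j => by simp [A, dist_eq_zero.1 hi])
  have hA : (Complex.ofRealHom.mapMatrix A).det ≠ 0 := by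
    rw [← RingHom.map_det]
    exact Complex.ofReal_ne_zero.2 hdet
  refine eq_zero_of_mulVec_eq_zero hA (funext fun i => ?_)
  have hrow : (Complex.ofRealHom.mapMatrix A *ᵥ f Q) i = dist Q (P i) * proj P f i Q := by
    simp only [mulVec, dotProduct, proj, Finset.mul_sum, RingHom.mapMatrix_apply, map_apply,
      Complex.ofRealHom_eq_coe, Complex.ofReal_div, A, of_apply]
    refine sum_congr rfl fun j _ => ?_
    field_simp [Complex.ofReal_ne_zero.2 (hQP i)]
  rw [hrow, h i, mul_zero, Pi.zero_apply]

theorem stmt10_general {n : ℕ} (Ω : Set (EuclideanSpace ℝ (Fin n)))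
    (P : Fin n → EuclideanSpace ℝ (Fin n))
    (hdet : (Matrix.of fun i j => P i j).det ≠ 0) :
    (∀ f g : EuclideanSpace ℝ (Fin n) → (Fin n → ℂ),
        MemLp f 2 (volume.restrict Ω) → MemLp g 2 (volume.restrict Ω) →
        sform Ω P g f = (starRingEnd ℂ) (sform Ω P f g))
    ∧ (∀ f : EuclideanSpace ℝ (Fin n) → (Fin n → ℂ), MemLp f 2 (volume.restrict Ω) →
        0 ≤ (sform Ω P f f).re ∧ (sform Ω P f f).im = 0)
    ∧ (∀ f : EuclideanSpace ℝ (Fin n) → (Fin n → ℂ), MemLp f 2 (volume.restrict Ω) →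
        sform Ω P f f = 0 → ∀ᵐ Q ∂(volume.restrict Ω), f Q = 0) := by
  refine ⟨fun f g _ _ => sform_swap Ω P f g, fun f _ => ?_, fun f hf h0 => ?_⟩
  · obtain ⟨hre, him⟩ := Complex.nonneg_iff.1 (sform_self_nonneg Ω P f)
    exact ⟨hre, him.symm⟩
  · filter_upwards [ae_proj_eq_zero_of_sform_self_eq_zero Ω P hf h0,
      ae_restrict_of_ae (measure_eq_zero_iff_ae_notMem.1 (volume_setOf_det_sub_eq_zero P hdet))]
      with Q hproj hQ
    exact eq_zero_of_forall_proj_eq_zero P hQ hproj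

/-- On a bounded convex domain `Ω` with boundary points `P₁,...,Pₙ` of
nonzero coordinate determinant, the form `t` is Hermitian, positive semidefinite and
definite on `L²(Ω; ℂⁿ)`: `t(f,f) = 0` implies `f = 0` a.e. Hence it is an inner product. -/
theorem stmt10 {n : ℕ} (Ω : Set (EuclideanSpace ℝ (Fin n)))
    (hconv : Convex ℝ Ω) (hbdd : Bornology.IsBounded Ω)
    (P : Fin n → EuclideanSpace ℝ (Fin n)) (hPfr : ∀ i, P i ∈ frontier Ω)
    (hdet : (Matrix.of fun i j => P i j).det ≠ 0) :
    (∀ f g : EuclideanSpace ℝ (Fin n) → (Fin n → ℂ),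
        MemLp f 2 (volume.restrict Ω) → MemLp g 2 (volume.restrict Ω) →
        sform Ω P g f = (starRingEnd ℂ) (sform Ω P f g))
    ∧ (∀ f : EuclideanSpace ℝ (Fin n) → (Fin n → ℂ), MemLp f 2 (volume.restrict Ω) →
        0 ≤ (sform Ω P f f).re ∧ (sform Ω P f f).im = 0)
    ∧ (∀ f : EuclideanSpace ℝ (Fin n) → (Fin n → ℂ), MemLp f 2 (volume.restrict Ω) →
        sform Ω P f f = 0 → ∀ᵐ Q ∂(volume.restrict Ω), f Q = 0) :=
  stmt10_general Ω P hdet
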